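/- arXiv:2404.06916 — 2 statements merged into one kernel-verified Lean document; each statement's English description precedes it below -/
import Mathlib

section
/- Let $\Lambda = kQ/I$ be a bound quiver algebra. If the set $Z\Lambda$ denotes the center of $\Lambda$ and $C = \sum_{a \in Q_1} a \in \Lambda$, then the kernel of the $k$-linear map $f^*_{\Lambda} : \bigoplus_{x \in Q_0} x\Lambda x \to \bigoplus_{a \in Q_1} t(a)\Lambda s(a)$ defined by $f^*_{\Lambda}(\lambda) = \lambda C - C\lambda$ (for $\lambda \in x\Lambda x$, with the component at arrow $a$ being $\lambda a$ if $t(a) = x$ minus $a\lambda$ if $s(a)=x$) equals the center $Z\Lambda$ of $\Lambda$, embedded via $z \mapsto (xzx)_{x \in Q_0}$. -/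
section
variable (k : Type*) [Field k] (Λ : Type*) [Ring Λ] [Algebra k Λ] [FiniteDimensional k Λ]
variable (Q0 Q1 : Type*) [Fintype Q0] [Fintype Q1] [DecidableEq Q0]
variable (s t : Q1 → Q0) (e : Q0 → Λ) (arr : Q1 → Λ)

/-- Let `Λ = kQ/I` be a bound quiver algebra, presented by a complete family of
orthogonal (vertex) idempotents `e x` and (classes of) arrows `arr a ∈ e (t a) Λ e (s a)`,
which together generate `Λ` as a `k`-algebra.  Then the kernel of the map
`f*_Λ : ⊕_{x ∈ Q0} xΛx → ⊕_{a ∈ Q1} t(a)Λs(a)`, `f*_Λ(λ) = λC - Cλ` (where `C = ∑ arr a`,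
i.e. the component at an arrow `a` of a tuple `λ = (λ_x)` is `λ_{t a} · arr a - arr a · λ_{s a}`),
equals the center `ZΛ` of `Λ`, embedded via `z ↦ (e x · z · e x)_{x ∈ Q0}`. -/
theorem stmt7
    (horth : ∀ x y, e x * e y = if x = y then e x else 0)
    (hsum : ∑ x, e x = 1)
    (harr : ∀ a, e (t a) * arr a * e (s a) = arr a)
    (hgen : Algebra.adjoin k (Set.range e ∪ Set.range arr) = ⊤) :
    {lam : Q0 → Λ | (∀ x, e x * lam x * e x = lam x) ∧
        ∀ a, lam (t a) * arr a - arr a * lam (s a) = 0}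
      = {lam : Q0 → Λ | ∃ z ∈ Subalgebra.center k Λ, lam = fun x => e x * z * e x} := by
  have hidem : ∀ x, e x * e x = e x := fun x => by rw [horth, if_pos rfl]
  have het : ∀ a, e (t a) * arr a = arr a := by
    intro a
    calc e (t a) * arr a = e (t a) * (e (t a) * arr a * e (s a)) := by rw [harr]
      _ = e (t a) * e (t a) * arr a * e (s a) := by rw [← mul_assoc, ← mul_assoc]
      _ = arr a := by rw [hidem, harr]
  have hes : ∀ a, arr a * e (s a) = arr a := by
    intro a
    calc arr a * e (s a) = e (t a) * arr a * e (s a) * e (s a) := by rw [harr]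
      _ = e (t a) * arr a * (e (s a) * e (s a)) := by rw [mul_assoc]
      _ = arr a := by rw [hidem, harr]
  ext lam
  simp only [Set.mem_setOf_eq]
  constructor
  · rintro ⟨h1, h2⟩
    have hel : ∀ y x, e y * lam x = if x = y then lam x else 0 := by
      intro y x
      by_cases h : x = y
      · subst h; rw [if_pos rfl, ← h1 x, ← mul_assoc, ← mul_assoc, hidem]
      · rw [if_neg h, ← h1 x, ← mul_assoc, ← mul_assoc, horth,
          if_neg (fun hyx => h hyx.symm), zero_mul, zero_mul]
    have hle : ∀ x y, lam x * e y = if x = y then lam x else 0 := by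
      intro x y
      by_cases h : x = y
      · subst h; rw [if_pos rfl, ← h1 x, mul_assoc, mul_assoc, hidem, ← mul_assoc]
      · rw [if_neg h, ← h1 x, mul_assoc, mul_assoc, horth, if_neg h, mul_zero, mul_zero]
    set z : Λ := ∑ x, lam x with hz
    have hez : ∀ y, e y * z = lam y := by
      intro y
      rw [hz, Finset.mul_sum]
      rw [Finset.sum_eq_single y (fun x _ hx => by rw [hel, if_neg hx])
        (fun h => absurd (Finset.mem_univ y) h)]
      rw [hel, if_pos rfl]
    have hze : ∀ y, z * e y = lam y := by
      intro y
      rw [hz, Finset.sum_mul]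
      rw [Finset.sum_eq_single y (fun x _ hx => by rw [hle, if_neg hx])
        (fun h => absurd (Finset.mem_univ y) h)]
      rw [hle, if_pos rfl]
    have hcent : z ∈ Subalgebra.center k Λ := by
      rw [Subalgebra.mem_center_iff]
      intro b
      have hb : b ∈ Algebra.adjoin k (Set.range e ∪ Set.range arr) := by
        rw [hgen]; trivial
      induction hb using Algebra.adjoin_induction with
      | mem u hu =>
        rcases hu with ⟨x, rfl⟩ | ⟨a, rfl⟩
        · rw [hez, hze]
        · have h2a := sub_eq_zero.mp (h2 a)
          calc arr a * z = arr a * e (s a) * z := by rw [hes]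
            _ = arr a * lam (s a) := by rw [mul_assoc, hez]
            _ = lam (t a) * arr a := h2a.symm
            _ = z * e (t a) * arr a := by rw [hze]
            _ = z * arr a := by rw [mul_assoc, het]
      | algebraMap r =>
        rw [Algebra.commutes]
      | add u v _ _ hu hv => rw [add_mul, mul_add, hu, hv]
      | mul u v _ _ hu hv => rw [mul_assoc, hv, ← mul_assoc, hu, mul_assoc]
    refine ⟨z, hcent, ?_⟩
    funext x
    rw [hez, hle, if_pos rfl]
  · rintro ⟨z, hzc, rfl⟩
    rw [Subalgebra.mem_center_iff] at hzc
    have hez : ∀ x, e x * z * e x = z * e x := by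
      intro x; rw [hzc (e x), mul_assoc, hidem]
    constructor
    · intro x
      show e x * (e x * z * e x) * e x = e x * z * e x
      rw [show e x * (e x * z * e x) * e x = e x * e x * z * (e x * e x) by
        noncomm_ring, hidem, hez]
    · intro a
      show e (t a) * z * e (t a) * arr a - arr a * (e (s a) * z * e (s a)) = 0
      rw [hez, hez, mul_assoc, het, ← hzc (e (s a)), ← mul_assoc, hes,
        hzc (arr a), sub_self]
end
end

section
/- Let $Q$ be a finite connected quiver without oriented cycles and $\Lambda = kQ/\langle Z \rangle$ a triangular monomial algebra with $B$ the set of paths not containing any path of $Z$. If $\mathrm{HH}^1(\Lambda) = 0$, i.e. $1 - |Q_0| + |(Q_1/\!/B)_u| = 0$, then the underlying undirected graph of $Q$ is a tree. (In particular, since $\{(a,a) : a \in Q_1\} \subseteq (Q_1/\!/B)_u$, the hypothesis forces $|Q_0| - |Q_1| \geq 1$, hence $Q$ is a tree.) -/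
universe u

/-- `iterRel adj n x y`: `y` is reachable from `x` in exactly `n` steps of `adj`. -/
def iterRel {V : Type u} (adj : V → V → Prop) : ℕ → V → V → Prop
  | 0, x, y => x = y
  | n + 1, x, y => ∃ z, iterRel adj n x z ∧ adj z y

theorem iterRel_of_reflTransGen {V : Type u} {adj : V → V → Prop} {x y : V}
    (h : Relation.ReflTransGen adj x y) : ∃ n, iterRel adj n x y := by
  induction h with
  | refl => exact ⟨0, rfl⟩
  | tail _ hbc ih => exact ⟨ih.choose + 1, _, ih.choose_spec, hbc⟩

/-- A finite connected (multi)graph has at least `|V| - 1` edges. -/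
theorem card_le_card_edges_add_one {V E : Type u} [Fintype V] [Fintype E]
    (s t : E → V) (hne : Nonempty V)
    (hconn : ∀ x y : V, Relation.ReflTransGen
      (fun u v => (∃ a, s a = u ∧ t a = v) ∨ (∃ a, s a = v ∧ t a = u)) x y) :
    Fintype.card V ≤ Fintype.card E + 1 := by
  classical
  obtain ⟨v0⟩ := hne
  set adj : V → V → Prop :=
    fun u v => (∃ a, s a = u ∧ t a = v) ∨ (∃ a, s a = v ∧ t a = u) with hadj
  -- distance from the root
  set d : V → ℕ := fun x => sInf {n | iterRel adj n v0 x} with hd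
  have hmem : ∀ x : V, iterRel adj (d x) v0 x := by
    intro x
    exact Nat.sInf_mem (iterRel_of_reflTransGen (hconn v0 x))
  have key : ∀ x : V, x ≠ v0 → ∃ a : E, ∃ z : V,
      ((s a = z ∧ t a = x) ∨ (s a = x ∧ t a = z)) ∧ d z < d x := by
    intro x hx
    have hx0 : d x ≠ 0 := by
      intro h0
      have := hmem x
      rw [h0] at this
      exact hx this.symm
    obtain ⟨m, hm⟩ : ∃ m, d x = m + 1 := ⟨d x - 1, by omega⟩
    have hit := hmem x
    rw [hm] at hit
    obtain ⟨z, hz, hzz⟩ := hit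
    have hdz : d z ≤ m := Nat.sInf_le hz
    rcases hzz with ⟨a, ha1, ha2⟩ | ⟨a, ha1, ha2⟩
    · exact ⟨a, z, Or.inl ⟨ha1, ha2⟩, by omega⟩
    · exact ⟨a, z, Or.inr ⟨ha1, ha2⟩, by omega⟩
  -- the injection from non-root vertices to edges
  set f : {x : V // x ≠ v0} → E := fun x => (key x.1 x.2).choose with hf
  have hfinj : Function.Injective f := by
    rintro ⟨x, hx⟩ ⟨y, hy⟩ hxy
    obtain ⟨z1, hz1, hdz1⟩ := (key x hx).choose_spec
    obtain ⟨z2, hz2, hdz2⟩ := (key y hy).choose_spec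
    simp only [hf] at hxy
    rw [hxy] at hz1
    ext
    by_contra hne'
    rcases hz1 with ⟨h1, h2⟩ | ⟨h1, h2⟩ <;> rcases hz2 with ⟨h3, h4⟩ | ⟨h3, h4⟩
    · exact hne' (h2.symm.trans h4)
    · have e1 : z1 = y := h1.symm.trans h3
      have e2 : z2 = x := h4.symm.trans h2
      subst e1; subst e2; omega
    · have e1 : z1 = y := h2.symm.trans h4
      have e2 : z2 = x := h3.symm.trans h1
      subst e1; subst e2; omega
    · exact hne' (h1.symm.trans h3)
  have h1 : Fintype.card {x : V // x ≠ v0} ≤ Fintype.card E :=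
    Fintype.card_le_of_injective f hfinj
  have h2 : Fintype.card {x : V // x ≠ v0} = Fintype.card V - 1 := by
    rw [Fintype.card_subtype_compl, Fintype.card_subtype_eq]
  have h3 : 1 ≤ Fintype.card V := Fintype.card_pos_iff.mpr ⟨v0⟩
  omega

/-- Oriented paths in the quiver with vertex set `Q0`, arrow set `Q1` and source/target maps
`s, t : Q1 → Q0`.  `QPath s t x y` is the type of oriented paths from `x` to `y`. -/
inductive QPath {Q0 Q1 : Type u} (s t : Q1 → Q0) : Q0 → Q0 → Type u
  | nil (x : Q0) : QPath s t x x
  | cons {x : Q0} (a : Q1) (p : QPath s t x (s a)) : QPath s t x (t a)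

/-- The length-one path given by an arrow `a`. -/
def QPath.ofArrow {Q0 Q1 : Type u} (s t : Q1 → Q0) (a : Q1) : QPath s t (s a) (t a) :=
  QPath.cons a (QPath.nil (s a))

section
variable (Q0 Q1 : Type u) [Fintype Q0] [Fintype Q1] (s t : Q1 → Q0)

/-- Let `Λ = kQ/⟨Z⟩` be a triangular monomial algebra over a finite connected
quiver `Q` without oriented cycles, `B` the set of paths not containing any path of `Z`, and
`(Q1//B)_u` (here: the set `U` of pairs of an arrow and a parallel path) the set entering the
formula for `dim HH¹(Λ)`.  The set `U` always contains the diagonal pairs `(a, a)`.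
If `HH¹(Λ) = 0`, i.e. `1 - |Q0| + |U| = 0`, then the underlying undirected graph of `Q` is a
tree, i.e. (being connected) it satisfies `|Q0| = |Q1| + 1`. -/
theorem stmt16
    (hconn : ∀ x y : Q0, Relation.ReflTransGen
      (fun u v => (∃ a, s a = u ∧ t a = v) ∨ (∃ a, s a = v ∧ t a = u)) x y)
    (hacyclic : ∀ (x : Q0) (p : QPath s t x x), p = QPath.nil x)
    (U : Set (Σ a : Q1, QPath s t (s a) (t a))) [Fintype U]
    (hdiag : ∀ a : Q1, (⟨a, QPath.ofArrow s t a⟩ : Σ a : Q1, QPath s t (s a) (t a)) ∈ U)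
    (hHH1 : Fintype.card Q0 = 1 + Fintype.card U) :
    Fintype.card Q0 = Fintype.card Q1 + 1 := by
  classical
  -- `|Q0| ≥ 1`, so `Q0` is nonempty
  have hne : Nonempty Q0 := Fintype.card_pos_iff.mp (by omega)
  -- connectivity gives `|Q0| ≤ |Q1| + 1`
  have hle : Fintype.card Q0 ≤ Fintype.card Q1 + 1 :=
    card_le_card_edges_add_one s t hne hconn
  -- the diagonal injection `Q1 → U` gives `|Q1| ≤ |U|`
  have hinj : Function.Injective
      (fun a : Q1 => (⟨⟨a, QPath.ofArrow s t a⟩, hdiag a⟩ : U)) := by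
    intro a b hab
    exact congrArg Sigma.fst (congrArg Subtype.val hab)
  have hge : Fintype.card Q1 ≤ Fintype.card U := Fintype.card_le_of_injective _ hinj
  omega

end
end
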